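/- arXiv:1110.3741 — 5 statements merged into one kernel-verified Lean document; each statement's English description precedes it below -/
import Mathlib

section
/- Let d ≥ 1, let f : ℝ^d → ℝ be a probability density function (nonnegative, integrating to 1 with respect to Lebesgue measure), and let Y₁, …, Yₙ be independent random vectors in ℝ^d each with density f. For a measurable set A ⊆ ℝ^d, let 𝓕_A denote the set of indices i ∈ {1,…,n} such that Y_i ∈ A and no Y_j (j ≠ i) strictly dominates Y_i. Then E|𝓕_A| = n ∫_A f(x) (1 − ∫_{{y : y ⪯ x}} f(y) dy)^{n−1} dx, where {y : y ⪯ x} = {y ∈ ℝ^d : y_i ≤ x_i for all i}. -/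
/-!
By linearity of expectation the expected count is the sum over `i` of the probability that
`Y i` lies in `A` and is strictly dominated by no other sample. By independence the sample has
the product law `μ ^ n`, where `μ` is the law with density `f`, so Fubini over the `i`-th
coordinate turns this probability into `∫_A μ {y | ¬ y < x} ^ (n - 1) dμ(x)`. Since `μ` has a
density and `d ≥ 1`, `μ` has no atoms, so the strict lower set `{y | y < x}` has the same mass
as the orthant `Iic x`.
-/

open MeasureTheory ProbabilityTheory Set

def paretoIn {α ι : Type*} [LT α] (A : Set α) (i : ι) : Set (ι → α) :=
  {v | v i ∈ A ∧ ∀ j ≠ i, ¬v j < v i}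

def undominatedIn {α ι : Type*} [LT α] (A : Set α) : Set (α × (ι → α)) :=
  {p | p.1 ∈ A ∧ ∀ j, ¬p.2 j < p.1}

theorem paretoIn_eq_preimage_piFinSuccAbove {α : Type*} [LT α] [MeasurableSpace α]
    (A : Set α) {m : ℕ} (i : Fin (m + 1)) :
    paretoIn A i = MeasurableEquiv.piFinSuccAbove (fun _ => α) i ⁻¹' undominatedIn A := by
  ext v
  simp only [paretoIn, undominatedIn, mem_preimage, mem_ofPred_eq,
    MeasurableEquiv.piFinSuccAbove_apply]
  refine and_congr_right fun _ => ⟨fun h j => h _ (Fin.succAbove_ne i j), fun h j hj => ?_⟩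
  obtain ⟨k, rfl⟩ := Fin.exists_succAbove_eq hj
  exact h k

theorem integral_ncard_setOf_mem {Ω ι : Type*} [MeasurableSpace Ω] [Fintype ι] {P : Measure Ω}
    [IsFiniteMeasure P] {E : ι → Set Ω} (hE : ∀ i, MeasurableSet (E i)) :
    ∫ ω, ({i | ω ∈ E i}.ncard : ℝ) ∂P = ∑ i, P.real (E i) := by
  classical
  have hcount (ω : Ω) : ({i | ω ∈ E i}.ncard : ℝ) = ∑ i, (E i).indicator 1 ω := by
    rw [Set.ncard_eq_toFinset_card', Set.toFinset_ofPred, Finset.natCast_card_filter]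
    simp [indicator_apply]
  simp_rw [hcount]
  rw [integral_finsetSum _ fun i _ => (integrable_const 1).indicator (hE i)]
  simp_rw [integral_indicator_one (hE _)]

section Order

variable {α : Type*} [PartialOrder α] [TopologicalSpace α] [OrderClosedTopology α]
  [SecondCountableTopology α] [MeasurableSpace α] [OpensMeasurableSpace α]

theorem measurableSet_setOf_lt {δ : Type*} [MeasurableSpace δ] {f g : δ → α}
    (hf : Measurable f) (hg : Measurable g) : MeasurableSet {a | f a < g a} := by
  have hlt : {p : α × α | p.1 < p.2} = {p | p.1 ≤ p.2} \ diagonal α := by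
    ext p; simp [lt_iff_le_and_ne]
  have hmeas : MeasurableSet {p : α × α | p.1 < p.2} :=
    hlt ▸ measurableSet_le'.diff isClosed_diagonal.measurableSet
  exact hf.prodMk hg hmeas

theorem measurableSet_paretoIn {ι : Type*} [Countable ι] {A : Set α} (hA : MeasurableSet A)
    (i : ι) : MeasurableSet (paretoIn A i) := by
  have hlt (j : ι) : MeasurableSet {v : ι → α | v j < v i} :=
    measurableSet_setOf_lt (measurable_pi_apply j) (measurable_pi_apply i)
  simp only [paretoIn, ofPred_and, ofPred_forall]
  exact (measurable_pi_apply i hA).inter (.iInter fun j => .iInter fun _ => (hlt j).compl)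

theorem measurableSet_undominatedIn {ι : Type*} [Countable ι] {A : Set α}
    (hA : MeasurableSet A) : MeasurableSet (undominatedIn (ι := ι) A) := by
  have hlt (j : ι) : MeasurableSet {p : α × (ι → α) | p.2 j < p.1} :=
    measurableSet_setOf_lt ((measurable_pi_apply j).comp measurable_snd) measurable_fst
  simp only [undominatedIn, ofPred_and, ofPred_forall]
  exact (measurable_fst hA).inter (.iInter fun j => (hlt j).compl)

theorem measurable_measure_Iic (μ : Measure α) [SFinite μ] : Measurable fun x => μ (Iic x) :=
  measurable_measure_prodMk_left (measurableSet_le measurable_snd measurable_fst)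

theorem measure_setOf_not_lt (μ : Measure α) [IsProbabilityMeasure μ] [NullSingletonClass μ]
    (x : α) : μ {y | ¬y < x} = 1 - μ (Iic x) := by
  rw [← measure_congr (Iio_ae_eq_Iic (μ := μ))]
  exact prob_compl_eq_one_sub (measurableSet_setOf_lt measurable_id measurable_const)

theorem prod_pi_undominatedIn {ι : Type*} [Fintype ι] (μ : Measure α) [SigmaFinite μ]
    {A : Set α} (hA : MeasurableSet A) :
    (μ.prod (Measure.pi fun _ : ι => μ)) (undominatedIn A)
      = ∫⁻ x in A, μ {y | ¬y < x} ^ Fintype.card ι ∂μ := by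
  rw [Measure.prod_apply (measurableSet_undominatedIn hA), ← lintegral_indicator hA]
  refine lintegral_congr fun x => ?_
  by_cases hx : x ∈ A
  · have hslice : Prod.mk x ⁻¹' undominatedIn A = univ.pi fun _ : ι => {y | ¬y < x} := by
      ext w; simp [undominatedIn, hx]
    rw [hslice, Measure.pi_pi, Finset.prod_const, Finset.card_univ, indicator_of_mem hx]
  · have hslice : Prod.mk x ⁻¹' undominatedIn (ι := ι) A = ∅ := by
      ext w; simp [undominatedIn, hx]
    rw [hslice, measure_empty, indicator_of_notMem hx]

theorem pi_paretoIn (μ : Measure α) [SigmaFinite μ] {A : Set α} (hA : MeasurableSet A)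
    {n : ℕ} (i : Fin n) :
    Measure.pi (fun _ : Fin n => μ) (paretoIn A i) = ∫⁻ x in A, μ {y | ¬y < x} ^ (n - 1) ∂μ := by
  obtain ⟨m, rfl⟩ : ∃ m, n = m + 1 := Nat.exists_eq_add_one.mpr i.pos
  rw [paretoIn_eq_preimage_piFinSuccAbove, (measurePreserving_piFinSuccAbove _ i).measure_preimage
    (measurableSet_undominatedIn hA).nullMeasurableSet, prod_pi_undominatedIn μ hA,
    Fintype.card_fin, Nat.add_sub_cancel]

theorem toReal_setLIntegral_one_sub_measure_Iic_pow (μ : Measure α) [IsProbabilityMeasure μ]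
    (A : Set α) (m : ℕ) :
    (∫⁻ x in A, (1 - μ (Iic x)) ^ m ∂μ).toReal = ∫ x in A, (1 - μ.real (Iic x)) ^ m ∂μ := by
  rw [← integral_toReal (((measurable_measure_Iic μ).const_sub 1).pow_const m).aemeasurable
    (ae_of_all _ fun x => by finiteness)]
  congr 1 with x
  rw [ENNReal.toReal_pow, ENNReal.toReal_sub_of_le prob_le_one ENNReal.one_ne_top,
    ENNReal.toReal_one, measureReal_def]


theorem measureReal_preimage_paretoIn {Ω : Type*} [MeasurableSpace Ω] {P : Measure Ω} {n : ℕ}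
    {X : Fin n → Ω → α} (hX : ∀ i, Measurable (X i)) (hind : iIndepFun X P) {μ : Measure α}
    (hlaw : ∀ i, P.map (X i) = μ) [NullSingletonClass μ] {A : Set α} (hA : MeasurableSet A)
    (i : Fin n) :
    P.real ((fun ω j => X j ω) ⁻¹' paretoIn A i)
      = ∫ x in A, (1 - μ.real (Iic x)) ^ (n - 1) ∂μ := by
  have := hind.isProbabilityMeasure
  have : IsProbabilityMeasure μ := hlaw i ▸ Measure.isProbabilityMeasure_map (hX i).aemeasurable
  have hjoint : P.map (fun ω j => X j ω) = Measure.pi fun _ => μ := by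
    simp_rw [hind.map_fun_eq_pi_map fun i => (hX i).aemeasurable, hlaw]
  rw [measureReal_def,
    ← Measure.map_apply (measurable_pi_lambda _ hX) (measurableSet_paretoIn hA i), hjoint,
    pi_paretoIn μ hA i, ← toReal_setLIntegral_one_sub_measure_Iic_pow]
  simp_rw [measure_setOf_not_lt]

theorem integral_ncard_paretoIn {Ω : Type*} [MeasurableSpace Ω] {P : Measure Ω} {n : ℕ}
    {X : Fin n → Ω → α} (hX : ∀ i, Measurable (X i)) (hind : iIndepFun X P) {μ : Measure α}
    (hlaw : ∀ i, P.map (X i) = μ) [NullSingletonClass μ] {A : Set α} (hA : MeasurableSet A) :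
    ∫ ω, ({i | (fun j => X j ω) ∈ paretoIn A i}.ncard : ℝ) ∂P
      = n * ∫ x in A, (1 - μ.real (Iic x)) ^ (n - 1) ∂μ := by
  have := hind.isProbabilityMeasure
  refine (integral_ncard_setOf_mem
    fun i => measurable_pi_lambda _ hX (measurableSet_paretoIn hA i)).trans ?_
  simp_rw [measureReal_preimage_paretoIn hX hind hlaw hA]
  simp

end Order

theorem measureReal_withDensity_ofReal {α : Type*} [MeasurableSpace α] {ν : Measure α}
    {f : α → ℝ} (hf : Measurable f) (hf_nonneg : ∀ x, 0 ≤ f x) {s : Set α} (hs : MeasurableSet s) :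
    (ν.withDensity fun x => ENNReal.ofReal (f x)).real s = ∫ x in s, f x ∂ν := by
  rw [measureReal_def, withDensity_apply _ hs,
    integral_eq_lintegral_of_nonneg_ae (ae_of_all _ hf_nonneg) hf.aestronglyMeasurable]

theorem setIntegral_withDensity_ofReal {α : Type*} [MeasurableSpace α] {ν : Measure α}
    {f : α → ℝ} (hf : Measurable f) (hf_nonneg : ∀ x, 0 ≤ f x) {s : Set α} (hs : MeasurableSet s)
    (g : α → ℝ) :
    ∫ x in s, g x ∂ν.withDensity (fun x => ENNReal.ofReal (f x)) = ∫ x in s, f x * g x ∂ν := by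
  rw [setIntegral_withDensity_eq_setIntegral_toReal_smul hf.ennreal_ofReal
    (ae_of_all _ fun _ => ENNReal.ofReal_lt_top) g hs]
  simp_rw [ENNReal.toReal_ofReal (hf_nonneg _), smul_eq_mul]

theorem expected_pareto_points_in_set_general
    (d n : ℕ) (hd : 1 ≤ d)
    {Ω : Type*} [MeasureSpace Ω]
    (Y : Fin n → Ω → (Fin d → ℝ))
    (f : (Fin d → ℝ) → ℝ)
    (hf_meas : Measurable f) (hf_nonneg : ∀ x, 0 ≤ f x)
    (hY_meas : ∀ i, Measurable (Y i))
    (hY_indep : iIndepFun Y ℙ)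
    (hY_pdf : ∀ i, Measure.map (Y i) ℙ
        = volume.withDensity (fun x => ENNReal.ofReal (f x)))
    (A : Set (Fin d → ℝ)) (hA : MeasurableSet A) :
    ∫ ω, (({i : Fin n | Y i ω ∈ A ∧
        ∀ j : Fin n, j ≠ i →
          ¬((∀ k, Y j ω k ≤ Y i ω k) ∧ Y j ω ≠ Y i ω)} : Set (Fin n)).ncard : ℝ)
      = (n : ℝ) *
        ∫ x in A, f x * (1 - ∫ y in {y | ∀ k, y k ≤ x k}, f y) ^ (n - 1) := by
  have : Nonempty (Fin d) := ⟨⟨0, hd⟩⟩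
  have hpareto (ω : Ω) : {i : Fin n | Y i ω ∈ A ∧ ∀ j : Fin n, j ≠ i →
      ¬((∀ k, Y j ω k ≤ Y i ω k) ∧ Y j ω ≠ Y i ω)} = {i | (fun j => Y j ω) ∈ paretoIn A i} := by
    simp only [paretoIn, lt_iff_le_and_ne, Pi.le_def, mem_ofPred_eq]
  have hIic (x : Fin d → ℝ) : {y | ∀ k, y k ≤ x k} = Iic x := rfl
  simp_rw [hpareto, hIic, integral_ncard_paretoIn hY_meas hY_indep hY_pdf hA,
    setIntegral_withDensity_ofReal hf_meas hf_nonneg hA,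
    measureReal_withDensity_ofReal hf_meas hf_nonneg measurableSet_Iic]

/-- Expected number of Pareto-optimal points (points not strictly dominated by
any other sample) that lie in a measurable set `A`, for `n` i.i.d. samples on
`ℝ^d` with common density `f`. -/
theorem expected_pareto_points_in_set
    (d n : ℕ) (hd : 1 ≤ d) (hn : 1 ≤ n)
    {Ω : Type*} [MeasureSpace Ω] [IsProbabilityMeasure (ℙ : Measure Ω)]
    (Y : Fin n → Ω → (Fin d → ℝ))
    (f : (Fin d → ℝ) → ℝ)
    (hf_meas : Measurable f) (hf_nonneg : ∀ x, 0 ≤ f x)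
    (hf_int : ∫ x, f x = 1)
    (hY_meas : ∀ i, Measurable (Y i))
    (hY_indep : iIndepFun Y ℙ)
    (hY_pdf : ∀ i, Measure.map (Y i) ℙ
        = volume.withDensity (fun x => ENNReal.ofReal (f x)))
    (A : Set (Fin d → ℝ)) (hA : MeasurableSet A) :
    ∫ ω, (({i : Fin n | Y i ω ∈ A ∧
        ∀ j : Fin n, j ≠ i →
          ¬((∀ k, Y j ω k ≤ Y i ω k) ∧ Y j ω ≠ Y i ω)} : Set (Fin n)).ncard : ℝ)
      = (n : ℝ) *
        ∫ x in A, f x * (1 - ∫ y in {y | ∀ k, y k ≤ x k}, f y) ^ (n - 1) :=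
  expected_pareto_points_in_set_general d n hd Y f hf_meas hf_nonneg hY_meas hY_indep hY_pdf A hA
end

section
/- Let 0 < x < 1 and 0 < y < 1. Suppose p = (u,v) ∈ ℝ² satisfies 0 < u < x and y < v < 2y − uy/x, and q = (u′,v′) ∈ ℝ² satisfies x < u′ ≤ 1 and 0 < v′ < 2y − u′y/x. Then for every α ∈ ℝ² with α₁ ≥ 0, α₂ ≥ 0 and α ≠ 0, one has min(α₁u + α₂v, α₁u′ + α₂v′) < α₁x + α₂y. In particular, (x,y) does not minimize any nonzero nonnegative linear functional over any set of points containing p and q. -/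
/-!
Both points lie strictly below the line `y u + x v = 2 x y` through `(x, y)`, whose slope is
`-y / x`. A nonnegative functional `α` decreases from `(x, y)` along that line towards the left
when `α₂ y ≤ α₁ x`, and towards the right otherwise; in the first case the point of `A` (to the
left of `x`) beats `(x, y)`, in the second the point of `B` (to the right of `x`) does.
-/

lemma lt_two_mul_sub_div_iff {x y u v : ℝ} (hx : 0 < x) :
    v < 2 * y - u * y / x ↔ x * (v - y) < y * (x - u) := by
  have hline : 2 * y - u * y / x = y + y * (x - u) / x := by field_simp; ring
  rw [hline, ← sub_lt_iff_lt_add', lt_div_iff₀ hx, mul_comm]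

lemma weighted_lt_of_below_line_left {x y u v a b : ℝ} (hx : 0 < x) (hux : u < x)
    (hv : v < 2 * y - u * y / x) (ha : 0 ≤ a) (hb : 0 ≤ b) (hab : (a, b) ≠ 0)
    (hslope : b * y ≤ a * x) : a * u + b * v < a * x + b * y := by
  rw [lt_two_mul_sub_div_iff hx] at hv
  rcases hb.eq_or_lt with rfl | hb
  · have ha : 0 < a := ha.lt_of_ne fun h => hab (by rw [← h]; rfl)
    nlinarith
  · suffices x * (b * (v - y)) < x * (a * (x - u)) by nlinarith
    calc x * (b * (v - y)) = b * (x * (v - y)) := by ring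
      _ < b * (y * (x - u)) := mul_lt_mul_of_pos_left hv hb
      _ = (b * y) * (x - u) := by ring
      _ ≤ (a * x) * (x - u) := mul_le_mul_of_nonneg_right hslope (sub_pos.2 hux).le
      _ = x * (a * (x - u)) := by ring

lemma weighted_lt_of_below_line_right {x y u v a b : ℝ} (hx : 0 < x) (hxu : x < u)
    (hv : v < 2 * y - u * y / x) (ha : 0 ≤ a) (hb : 0 ≤ b) (hslope : a * x < b * y) :
    a * u + b * v < a * x + b * y := by
  rw [lt_two_mul_sub_div_iff hx] at hv
  have hb : 0 < b := hb.lt_of_ne <| by rintro rfl; nlinarith [mul_nonneg ha hx.le]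
  suffices x * (b * (v - y)) < x * (a * (x - u)) by nlinarith
  calc x * (b * (v - y)) = b * (x * (v - y)) := by ring
    _ < b * (y * (x - u)) := mul_lt_mul_of_pos_left hv hb
    _ = (b * y) * (x - u) := by ring
    _ < (a * x) * (x - u) := mul_lt_mul_of_neg_right hslope (sub_neg.2 hxu)
    _ = x * (a * (x - u)) := by ring

theorem scalarization_fails_with_A_B_points_general
    (x y : ℝ) (hx : 0 < x)
    (u v : ℝ) (hux : u < x) (hv : v < 2*y - u*y/x)
    (u' v' : ℝ) (hxu' : x < u')
    (hv'2 : v' < 2*y - u'*y/x)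
    (α : ℝ × ℝ) (hα1 : 0 ≤ α.1) (hα2 : 0 ≤ α.2) (hα : α ≠ 0) :
    min (α.1 * u + α.2 * v) (α.1 * u' + α.2 * v') < α.1 * x + α.2 * y ∧
    ∀ S : Set (ℝ × ℝ), (u, v) ∈ S → (u', v') ∈ S →
      ¬ (∀ q ∈ S, α.1 * x + α.2 * y ≤ α.1 * q.1 + α.2 * q.2) := by
  have hmin : min (α.1 * u + α.2 * v) (α.1 * u' + α.2 * v') < α.1 * x + α.2 * y := by
    rcases le_or_gt (α.2 * y) (α.1 * x) with hslope | hslope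
    · exact min_lt_of_left_lt
        (weighted_lt_of_below_line_left hx hux hv hα1 hα2 hα hslope)
    · exact min_lt_of_right_lt (weighted_lt_of_below_line_right hx hxu' hv'2 hα1 hα2 hslope)
  refine ⟨hmin, fun S hp hq hmin_at => ?_⟩
  rcases min_lt_iff.1 hmin with hlt | hlt
  · exact (hmin_at _ hp).not_gt hlt
  · exact (hmin_at _ hq).not_gt hlt

/-- If `p = (u,v)` lies in the region `A` and `q = (u',v')` lies in the region
`B` associated to the point `(x,y)`, then for every nonzero nonnegative weight
vector `α`, one of `p`, `q` attains a strictly smaller linear score than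
`(x,y)`; in particular `(x,y)` minimizes no nonzero nonnegative linear
functional over any set containing `p` and `q`. -/
theorem scalarization_fails_with_A_B_points
    (x y : ℝ) (hx : 0 < x) (hx1 : x < 1) (hy : 0 < y) (hy1 : y < 1)
    (u v : ℝ) (hu : 0 < u) (hux : u < x) (hyv : y < v) (hv : v < 2*y - u*y/x)
    (u' v' : ℝ) (hxu' : x < u') (hu'1 : u' ≤ 1) (hv' : 0 < v')
    (hv'2 : v' < 2*y - u'*y/x)
    (α : ℝ × ℝ) (hα1 : 0 ≤ α.1) (hα2 : 0 ≤ α.2) (hα : α ≠ 0) :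
    min (α.1 * u + α.2 * v) (α.1 * u' + α.2 * v') < α.1 * x + α.2 * y ∧
    ∀ S : Set (ℝ × ℝ), (u, v) ∈ S → (u', v') ∈ S →
      ¬ (∀ q ∈ S, α.1 * x + α.2 * y ≤ α.1 * q.1 + α.2 * q.2) :=
  scalarization_fails_with_A_B_points_general x y hx u v hux hv u' v' hxu' hv'2 α hα1 hα2 hα
end

section
/- Let S ⊆ [0,1]² be a finite set, and let (x,y) ∈ S with 0 < x ≤ 1 and 0 < y ≤ 1/2. Define the closed regions Ā = {(u,v) : 0 ≤ u ≤ x, y ≤ v, yu + xv ≤ 2xy} and B̄ = {(u,v) : x ≤ u ≤ 1, 0 ≤ v, yu + xv ≤ 2xy}. Assume (i) no point of S strictly dominates (x,y), and (ii) no point of S other than (x,y) lies in Ā ∪ B̄. Then every (u,v) ∈ S satisfies yu + xv ≥ 2xy; that is, (x,y) minimizes the linear functional (u,v) ↦ yu + xv over S, and hence (x,y) belongs to the linear-scalarization set of S. -/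
lemma mem_regions_or_dominates_of_below_line {x y u v : ℝ} (hu0 : 0 ≤ u) (hu1 : u ≤ 1) (hv0 : 0 ≤ v)
    (hlt : y * u + x * v < 2 * x * y) :
    (0 ≤ u ∧ u ≤ x ∧ y ≤ v ∧ y * u + x * v ≤ 2 * x * y) ∨
      (x ≤ u ∧ u ≤ 1 ∧ 0 ≤ v ∧ y * u + x * v ≤ 2 * x * y) ∨ (u ≤ x ∧ v < y) := by
  rcases le_or_gt u x with hux | hxu
  · rcases le_or_gt y v with hyv | hvy
    · exact Or.inl ⟨hu0, hux, hyv, hlt.le⟩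
    · exact Or.inr (Or.inr ⟨hux, hvy⟩)
  · exact Or.inr (Or.inl ⟨hxu.le, hu1, hv0, hlt.le⟩)

theorem pareto_point_in_scalarization_set_general
    (S : Set (ℝ × ℝ))
    (hSsub : S ⊆ Set.Icc (0:ℝ) 1 ×ˢ Set.Icc (0:ℝ) 1)
    (x y : ℝ)
    (hx : 0 < x) (hy : 0 < y)
    (hdom : ∀ q ∈ S, ¬(q.1 ≤ x ∧ q.2 ≤ y ∧ (q.1 < x ∨ q.2 < y)))
    (hAB : ∀ q ∈ S, q ≠ (x, y) →
      ¬((0 ≤ q.1 ∧ q.1 ≤ x ∧ y ≤ q.2 ∧ y * q.1 + x * q.2 ≤ 2 * x * y) ∨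
        (x ≤ q.1 ∧ q.1 ≤ 1 ∧ 0 ≤ q.2 ∧ y * q.1 + x * q.2 ≤ 2 * x * y))) :
    (∀ q ∈ S, 2 * x * y ≤ y * q.1 + x * q.2) ∧
    (∃ α : ℝ × ℝ, 0 ≤ α.1 ∧ 0 ≤ α.2 ∧ α ≠ 0 ∧
      ∀ q ∈ S, α.1 * x + α.2 * y ≤ α.1 * q.1 + α.2 * q.2) := by
  have hmin : ∀ q ∈ S, 2 * x * y ≤ y * q.1 + x * q.2 := by
    intro q hq
    by_contra! hlt
    have hne : q ≠ (x, y) := by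
      rintro rfl
      linarith
    obtain ⟨⟨hu0, hu1⟩, hv0, -⟩ := hSsub hq
    rcases mem_regions_or_dominates_of_below_line hu0 hu1 hv0 hlt with hA | hB | ⟨hux, hvy⟩
    · exact hAB q hq hne (Or.inl hA)
    · exact hAB q hq hne (Or.inr hB)
    · exact hdom q hq ⟨hux, hvy.le, Or.inr hvy⟩
  refine ⟨hmin, (y, x), hy.le, hx.le, fun h => hy.ne' (congrArg Prod.fst h), fun q hq => ?_⟩
  linarith [hmin q hq]

/-- If `(x,y) ∈ S` is not strictly dominated by any point of `S`, and no other
point of `S` lies in the closed regions `Ā ∪ B̄`, then `(x,y)` minimizes the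
linear functional `(u,v) ↦ y·u + x·v` over `S`; hence `(x,y)` belongs to the
linear-scalarization set of `S`. -/
theorem pareto_point_in_scalarization_set
    (S : Set (ℝ × ℝ)) (hS : S.Finite)
    (hSsub : S ⊆ Set.Icc (0:ℝ) 1 ×ˢ Set.Icc (0:ℝ) 1)
    (x y : ℝ) (hxyS : (x, y) ∈ S)
    (hx : 0 < x) (hx1 : x ≤ 1) (hy : 0 < y) (hy2 : y ≤ 1/2)
    (hdom : ∀ q ∈ S, ¬(q.1 ≤ x ∧ q.2 ≤ y ∧ (q.1 < x ∨ q.2 < y)))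
    (hAB : ∀ q ∈ S, q ≠ (x, y) →
      ¬((0 ≤ q.1 ∧ q.1 ≤ x ∧ y ≤ q.2 ∧ y * q.1 + x * q.2 ≤ 2 * x * y) ∨
        (x ≤ q.1 ∧ q.1 ≤ 1 ∧ 0 ≤ q.2 ∧ y * q.1 + x * q.2 ≤ 2 * x * y))) :
    (∀ q ∈ S, 2 * x * y ≤ y * q.1 + x * q.2) ∧
    (∃ α : ℝ × ℝ, 0 ≤ α.1 ∧ 0 ≤ α.2 ∧ α ≠ 0 ∧
      ∀ q ∈ S, α.1 * x + α.2 * y ≤ α.1 * q.1 + α.2 * q.2) :=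
  pareto_point_in_scalarization_set_general S hSsub x y hx hy hdom hAB
end

section
/- Let a be a real number with 0 < a ≤ 4. Then there exists a constant C > 0 such that for all integers n ≥ 2, | ∫₀^{1/2} ∫₀^{1/2} n (1 − a x y)^{n−1} dx dy − (1/a) ln n | ≤ C. -/
/-!
Integrating in `y` turns `n (1 - a x y)^(n-1)` into a geometric sum in `1 - a x / 2`, and
integrating that termwise in `x` gives exactly `(H_n - ∑_{k=1}^n q^k / k) / a` with
`q = 1 - a / 4 ∈ [0, 1)`. Now `H_n = log n + O(1)`, and the second sum is a partial sum of the
nonnegative series of `-log (1 - q) = log (4 / a)`.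
-/

open MeasureTheory Finset Real

theorem integral_one_sub_mul_pow {c : ℝ} (hc : c ≠ 0) (b : ℝ) (k : ℕ) :
    ∫ y in (0:ℝ)..b, (1 - c * y) ^ k = (1 - (1 - c * b) ^ (k + 1)) / (c * (k + 1)) := by
  rw [intervalIntegral.integral_comp_sub_mul (fun u => u ^ k) hc, integral_pow]
  simp only [mul_zero, sub_zero, one_pow, smul_eq_mul]
  field_simp

theorem integral_natCast_mul_one_sub_mul_pow_pred (c b : ℝ) (n : ℕ) :
    ∫ y in (0:ℝ)..b, (n : ℝ) * (1 - c * y) ^ (n - 1) =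
      b * ∑ k ∈ range n, (1 - c * b) ^ k := by
  rcases eq_or_ne c 0 with rfl | hc
  · simp [mul_comm]
  rcases n with _ | m
  · simp
  rw [intervalIntegral.integral_const_mul, Nat.add_sub_cancel, integral_one_sub_mul_pow hc,
    ← geom_sum_mul_neg, sub_sub_cancel]
  push_cast
  field_simp

theorem integral_integral_natCast_mul_one_sub_mul_mul_pow_pred {a b : ℝ} (ha : a ≠ 0)
    (hb : b ≠ 0) (n : ℕ) :
    ∫ x in (0:ℝ)..b, ∫ y in (0:ℝ)..b, (n : ℝ) * (1 - a * x * y) ^ (n - 1) =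
      (harmonic n - ∑ k ∈ range n, (1 - a * b ^ 2) ^ (k + 1) / (k + 1)) / a := by
  simp_rw [integral_natCast_mul_one_sub_mul_pow_pred, mul_right_comm a _ b]
  rw [intervalIntegral.integral_const_mul, intervalIntegral.integral_finsetSum
    (fun k _ => by apply Continuous.intervalIntegrable; fun_prop)]
  simp only [integral_one_sub_mul_pow (mul_ne_zero ha hb)]
  rw [harmonic, Rat.cast_sum, ← sum_sub_distrib, sum_div, mul_sum]
  refine sum_congr rfl fun k _ => ?_
  push_cast
  field_simp

theorem sum_range_pow_succ_div_le_neg_log {q : ℝ} (hq0 : 0 ≤ q) (hq1 : q < 1) (n : ℕ) :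
    ∑ k ∈ range n, q ^ (k + 1) / (k + 1) ≤ -log (1 - q) :=
  sum_le_hasSum _ (fun k _ => by positivity)
    (hasSum_pow_div_log_of_abs_lt_one (by rwa [abs_of_nonneg hq0]))

theorem log_le_harmonic (n : ℕ) : log n ≤ harmonic n := by
  rcases n.eq_zero_or_pos with rfl | hn_pos
  · simp
  calc log n ≤ log (n + 1 : ℕ) := log_le_log (by positivity) (by push_cast; linarith)
    _ ≤ harmonic n := log_add_one_le_harmonic n

theorem abs_harmonic_sub_sub_log_le {G L : ℝ} (hG0 : 0 ≤ G) (hGL : G ≤ L) (n : ℕ) :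
    |harmonic n - G - log n| ≤ 1 + L := by
  have := log_le_harmonic n
  have := harmonic_le_one_add_log n
  rw [abs_le]
  constructor <;> linarith

/-- For `0 < a ≤ 4`,
`∫₀^{1/2} ∫₀^{1/2} n (1 − a x y)^{n−1} dx dy = (1/a) ln n + O(1)`. -/
theorem integral_log_asymptotics
    (a : ℝ) (ha : 0 < a) (ha4 : a ≤ 4) :
    ∃ C > 0, ∀ n : ℕ, 2 ≤ n →
      |(∫ x in Set.Icc (0:ℝ) (1/2), ∫ y in Set.Icc (0:ℝ) (1/2),
          (n : ℝ) * (1 - a * x * y) ^ (n - 1))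
        - (1 / a) * Real.log n| ≤ C := by
  have hlog : 0 ≤ log (4 / a) := log_nonneg ((one_le_div ha).2 ha4)
  refine ⟨(1 + log (4 / a)) / a, by positivity, fun n _ => ?_⟩
  have hq : 0 ≤ 1 - a * (1 / 2 : ℝ) ^ 2 := by linarith
  have hlog_eq : -log (1 - (1 - a * (1 / 2) ^ 2)) = log (4 / a) := by
    rw [sub_sub_cancel, ← log_inv]
    congr 1
    field_simp
    norm_num
  simp_rw [integral_Icc_eq_integral_Ioc,
    ← intervalIntegral.integral_of_le (by norm_num : (0:ℝ) ≤ 1/2)]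
  rw [integral_integral_natCast_mul_one_sub_mul_mul_pow_pred ha.ne' (by norm_num),
    one_div_mul_eq_div, ← sub_div, abs_div, abs_of_pos ha]
  gcongr
  refine abs_harmonic_sub_sub_log_le (sum_nonneg fun k _ => by positivity) ?_ n
  exact hlog_eq ▸ sum_range_pow_succ_div_le_neg_log hq (by linarith) n
end

section
/- Let d ≥ 1 be an integer, λ ∈ [0,1], a > 0, b ≥ 0, and h > 0 satisfy a h^d ≤ 1/2 and b h ≤ a/2. Let g : [0,h] → ℝ be measurable with |g(t)| ≤ b t^{d+1} for all t ∈ [0,h]. Then there exists a constant C > 0, depending only on d, λ, a, and h (but not on b, g, or n), such that for all integers n ≥ 2, | ∫₀^h t^λ (1 − a t^d + g(t))^{n−1} dt − Γ((1+λ)/d) / (d (a n)^{(1+λ)/d}) | ≤ C (1 + b) n^{−(2+λ)/d}, where Γ denotes the Gamma function Γ(z) = ∫₀^∞ t^{z−1} e^{−t} dt. -/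
/-!
Write `m = n - 1`, `F t = 1 - a t^d + g t` and `M(q, c) = ∫₀^∞ t^q e^{-c t^d} dt
= Γ((q+1)/d) / (d c^{(q+1)/d})` (`laplaceMoment d q c`), so that the main term is `M(λ, a n)`.
On `[0, h]`, `0 ≤ F ≤ e^{-a t^d / 2}` and `|F - e^{-a t^d}| ≤ |g| + (a t^d)^2`, so the mean value
bound for `x ↦ x^m` replaces `F^m` by `e^{-m a t^d}` at a cost of
`2m (b M(λ+d+1, ma/2) + a² M(λ+2d, ma/2))`. Extending the integral to `[0, ∞)` costs at most
`h^{-d} M(λ+d, ma)`, since the tail may be weighted by `(t/h)^d ≥ 1`, and passing from `ma` to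
`na` costs at most `a M(λ+d, ma)` because `1 - e^{-x} ≤ x`. As `M(q, κ m) = m^{-(q+1)/d} M(q, κ)`,
every error term is `O((1 + b) m^{-(2+λ)/d})`, and `m ≥ n / 2`.
-/

open Real MeasureTheory Set

noncomputable def laplaceMoment (d : ℕ) (q c : ℝ) : ℝ :=
  ∫ t in Ioi (0 : ℝ), t ^ q * exp (-(c * t ^ d))

section

variable {d : ℕ} {q c : ℝ}

theorem integrableOn_rpow_mul_exp_neg_mul_pow (hd : 0 < d) (hq : -1 < q) (hc : 0 < c) :
    IntegrableOn (fun t : ℝ ↦ t ^ q * exp (-(c * t ^ d))) (Ioi 0) := by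
  refine (integrableOn_rpow_mul_exp_neg_mul_rpow hq (Nat.cast_pos.2 hd) hc).congr_fun
    (fun t _ ↦ ?_) measurableSet_Ioi
  simp [rpow_natCast]

theorem laplaceMoment_eq_Gamma_div (hd : 0 < d) (hq : -1 < q) (hc : 0 < c) :
    laplaceMoment d q c = Gamma ((q + 1) / d) / (d * c ^ ((q + 1) / d)) := by
  have h := integral_rpow_mul_exp_neg_mul_rpow (Nat.cast_pos.2 hd) hq hc
  simp only [rpow_natCast, neg_mul] at h
  rw [laplaceMoment, h, neg_div, rpow_neg hc.le]
  field_simp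

theorem laplaceMoment_pos (hd : 0 < d) (hq : -1 < q) (hc : 0 < c) : 0 < laplaceMoment d q c := by
  have : 0 < (q + 1) / d := div_pos (by linarith) (Nat.cast_pos.2 hd)
  rw [laplaceMoment_eq_Gamma_div hd hq hc]
  exact div_pos (Gamma_pos_of_pos this) (by positivity)

theorem laplaceMoment_mul_le (hd : 0 < d) (hq : -1 < q) (hc : 0 < c) {s p : ℝ} (hs : 1 ≤ s)
    (hp : p ≤ (q + 1) / d) :
    laplaceMoment d q (c * s) ≤ s ^ (-p) * laplaceMoment d q c := by
  have hM := laplaceMoment_pos hd hq hc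
  rw [laplaceMoment_eq_Gamma_div hd hq hc] at hM ⊢
  rw [laplaceMoment_eq_Gamma_div hd hq (by positivity), mul_rpow hc.le (by linarith),
    show ∀ x y z : ℝ, x / (d * (y * z)) = z⁻¹ * (x / (d * y)) by intros; field_simp,
    ← rpow_neg (by linarith)]
  gcongr

theorem abs_laplaceMoment_sub_le (hd : 0 < d) (hq : -1 < q) (hc : 0 < c) {c' : ℝ}
    (hcc' : c ≤ c') :
    |laplaceMoment d q c - laplaceMoment d q c'| ≤ (c' - c) * laplaceMoment d (q + d) c := by
  have hq' : -1 < q + d := by linarith [d.cast_nonneg (α := ℝ)]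
  unfold laplaceMoment
  rw [← integral_sub (G := ℝ) (integrableOn_rpow_mul_exp_neg_mul_pow hd hq hc)
    (integrableOn_rpow_mul_exp_neg_mul_pow hd hq (hc.trans_le hcc')),
    ← integral_const_mul (μ := volume.restrict (Ioi 0)) (c' - c)]
  refine norm_integral_le_of_norm_le (G := ℝ)
    ((integrableOn_rpow_mul_exp_neg_mul_pow hd hq' hc).const_mul _) ?_
  filter_upwards [ae_restrict_mem measurableSet_Ioi] with t (ht : 0 < t)
  have hE := exp_pos (-(c * t ^ d))
  have hδ : 0 ≤ (c' - c) * t ^ d := mul_nonneg (sub_nonneg.2 hcc') (by positivity)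
  have hsplit : exp (-(c' * t ^ d)) = exp (-(c * t ^ d)) * exp (-((c' - c) * t ^ d)) := by
    rw [← exp_add]; ring_nf
  have h₁ := add_one_le_exp (-((c' - c) * t ^ d))
  have h₂ : exp (-((c' - c) * t ^ d)) ≤ 1 := exp_le_one_iff.2 (by linarith)
  rw [Real.norm_eq_abs, ← mul_sub, abs_mul, abs_of_pos (rpow_pos_of_pos ht q), hsplit,
    abs_of_nonneg (by nlinarith), rpow_add_natCast ht.ne',
    show (c' - c) * (t ^ q * t ^ d * exp (-(c * t ^ d)))
      = t ^ q * ((c' - c) * t ^ d * exp (-(c * t ^ d))) by ring]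
  gcongr
  nlinarith

theorem abs_setIntegral_Icc_sub_laplaceMoment_le (hd : 0 < d) (hq : -1 < q) (hc : 0 < c) {h : ℝ}
    (hh : 0 < h) :
    |(∫ t in Icc 0 h, t ^ q * exp (-(c * t ^ d))) - laplaceMoment d q c|
      ≤ laplaceMoment d (q + d) c / h ^ d := by
  have hq' : -1 < q + d := by linarith [d.cast_nonneg (α := ℝ)]
  have hI := integrableOn_rpow_mul_exp_neg_mul_pow hd hq hc
  have hI' := integrableOn_rpow_mul_exp_neg_mul_pow hd hq' hc
  unfold laplaceMoment
  rw [integral_Icc_eq_integral_Ioc, ← Ioc_union_Ioi_eq_Ioi hh.le,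
    setIntegral_union (E := ℝ) Ioc_disjoint_Ioi_same measurableSet_Ioi
      (hI.mono_set Ioc_subset_Ioi_self) (hI.mono_set (Ioi_subset_Ioi hh.le)),
    Ioc_union_Ioi_eq_Ioi hh.le, sub_add_cancel_left,
    abs_neg, ← integral_div (μ := volume.restrict (Ioi 0)) (h ^ d)]
  calc |∫ t in Ioi h, t ^ q * exp (-(c * t ^ d))|
      ≤ ∫ t in Ioi h, t ^ (q + d) * exp (-(c * t ^ d)) / h ^ d := by
        refine norm_integral_le_of_norm_le (G := ℝ)
          ((hI'.mono_set (Ioi_subset_Ioi hh.le)).div_const _) ?_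
        filter_upwards [ae_restrict_mem measurableSet_Ioi] with t (ht : h < t)
        have ht0 : 0 < t := hh.trans ht
        rw [Real.norm_eq_abs, abs_of_nonneg (by positivity), rpow_add_natCast ht0.ne',
          le_div_iff₀ (by positivity)]
        have : h ^ d ≤ t ^ d := by gcongr
        calc t ^ q * exp (-(c * t ^ d)) * h ^ d ≤ t ^ q * exp (-(c * t ^ d)) * t ^ d := by gcongr
          _ = _ := by ring
    _ ≤ _ := by
        refine setIntegral_mono_set (hI'.div_const _) ?_ (Ioi_subset_Ioi hh.le).eventuallyLE
        filter_upwards [ae_restrict_mem measurableSet_Ioi] with t (ht : 0 < t)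
        positivity

end

theorem abs_one_sub_add_pow_sub_exp_le {u e : ℝ} (hu : 0 ≤ u) (hu' : u ≤ 1 / 2)
    (he : |e| ≤ u / 2) (m : ℕ) :
    |(1 - u + e) ^ m - exp (-(m * u))| ≤ 2 * m * exp (-(m * (u / 2))) * (|e| + u ^ 2) := by
  obtain _ | m := m
  · simp
  have he' := abs_le.1 he
  have hlin := add_one_le_exp (-(u / 2))
  have hF : |1 - u + e| ≤ exp (-(u / 2)) := abs_le.2 ⟨by linarith, by linarith⟩
  have hE : |exp (-u)| ≤ exp (-(u / 2)) := by
    rw [abs_of_pos (exp_pos _)]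
    exact exp_le_exp.2 (by linarith)
  have hFE : |1 - u + e - exp (-u)| ≤ |e| + u ^ 2 := by
    have := abs_exp_sub_one_sub_id_le (x := -u) (by rw [abs_neg, abs_of_nonneg hu]; linarith)
    calc |1 - u + e - exp (-u)| = |e - (exp (-u) - 1 - -u)| := by ring_nf
      _ ≤ |e| + |exp (-u) - 1 - -u| := abs_sub _ _
      _ ≤ |e| + u ^ 2 := by rw [neg_sq] at this; linarith
  -- `exp (-u / 2) ≥ 1 / 2` turns the exponent `m` of the mean value bound into `m + 1`
  have hpow : exp (-(u / 2)) ^ m ≤ 2 * exp (-(u / 2)) ^ (m + 1) := by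
    rw [pow_succ]
    nlinarith [pow_nonneg (exp_pos (-(u / 2))).le m]
  rw [show exp (-((m + 1 : ℕ) * u)) = exp (-u) ^ (m + 1) by rw [← exp_nat_mul]; ring_nf,
    show exp (-((m + 1 : ℕ) * (u / 2))) = exp (-(u / 2)) ^ (m + 1) by
      rw [← exp_nat_mul]; ring_nf]
  calc |(1 - u + e) ^ (m + 1) - exp (-u) ^ (m + 1)|
      ≤ |1 - u + e - exp (-u)| * (m + 1 : ℕ) * max |1 - u + e| |exp (-u)| ^ m :=
        abs_pow_sub_pow_le ..
    _ ≤ (|e| + u ^ 2) * (m + 1 : ℕ) * exp (-(u / 2)) ^ m := by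
        gcongr
        exact max_le hF hE
    _ ≤ (|e| + u ^ 2) * (m + 1 : ℕ) * (2 * exp (-(u / 2)) ^ (m + 1)) := by gcongr
    _ = _ := by ring

theorem rpow_neg_le_rpow_mul_rpow_neg {x y k ν : ℝ} (hx : 0 < x) (hy : 0 < y) (hyx : y ≤ k * x)
    (hν : 0 ≤ ν) : x ^ (-ν) ≤ k ^ ν * y ^ (-ν) := by
  have hk : 0 < k := pos_of_mul_pos_left (hy.trans_le hyx) hx.le
  calc x ^ (-ν) = k ^ ν * (k * x) ^ (-ν) := by
        rw [mul_rpow hk.le hx.le, rpow_neg hk.le, ← mul_assoc,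
          mul_inv_cancel₀ (rpow_pos_of_pos hk ν).ne', one_mul]
    _ ≤ k ^ ν * y ^ (-ν) :=
        mul_le_mul_of_nonneg_left (rpow_le_rpow_of_nonpos hy hyx (by linarith)) (by positivity)

section

variable {d : ℕ} {q a b h : ℝ} {g : ℝ → ℝ}

theorem abs_setIntegral_pow_sub_setIntegral_exp_le (hd : 0 < d)
    (hq : -1 < q) (ha : 0 < a) (hb : 0 ≤ b) (hah : a * h ^ d ≤ 1 / 2) (hbh : b * h ≤ a / 2)
    (hg : Measurable g) (hgb : ∀ t ∈ Icc 0 h, |g t| ≤ b * t ^ (d + 1))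
    {m : ℕ} (hm : 0 < m) :
    |(∫ t in Icc 0 h, t ^ q * (1 - a * t ^ d + g t) ^ m)
        - ∫ t in Icc 0 h, t ^ q * exp (-(a * m * t ^ d))|
      ≤ 2 * m * (b * laplaceMoment d (q + (d + 1 : ℕ)) (a / 2 * m)
        + a ^ 2 * laplaceMoment d (q + (2 * d : ℕ)) (a / 2 * m)) := by
  have hc : 0 < a / 2 * m := by positivity
  have hq₁ : -1 < q + (d + 1 : ℕ) := by have := (d + 1).cast_nonneg (α := ℝ); linarith
  have hq₂ : -1 < q + (2 * d : ℕ) := by have := (2 * d).cast_nonneg (α := ℝ); linarith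
  set Φ : ℝ → ℝ := fun t ↦
    2 * m * (b * (t ^ (q + (d + 1 : ℕ)) * exp (-(a / 2 * m * t ^ d)))
      + a ^ 2 * (t ^ (q + (2 * d : ℕ)) * exp (-(a / 2 * m * t ^ d)))) with hΦ
  have hΦint : IntegrableOn Φ (Ioi 0) :=
    (((integrableOn_rpow_mul_exp_neg_mul_pow hd hq₁ hc).const_mul b).add
      ((integrableOn_rpow_mul_exp_neg_mul_pow hd hq₂ hc).const_mul _)).const_mul _
  have hbound : ∀ t ∈ Ioc 0 h, |t ^ q * (1 - a * t ^ d + g t) ^ m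
      - t ^ q * exp (-(a * m * t ^ d))| ≤ Φ t := by
    intro t ⟨ht0, hth⟩
    have hu : a * t ^ d ≤ 1 / 2 := le_trans (by gcongr) hah
    have hg' : |g t| ≤ b * t ^ (d + 1) := hgb t ⟨ht0.le, hth⟩
    have he : |g t| ≤ a * t ^ d / 2 := by
      calc |g t| ≤ b * t ^ (d + 1) := hg'
        _ = b * t * t ^ d := by ring
        _ ≤ a / 2 * t ^ d := by gcongr; nlinarith
        _ = a * t ^ d / 2 := by ring
    have key := abs_one_sub_add_pow_sub_exp_le (by positivity) hu he m
    rw [← mul_sub, abs_mul, abs_of_pos (rpow_pos_of_pos ht0 q), hΦ]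
    simp only [rpow_add_natCast ht0.ne']
    calc t ^ q * |(1 - a * t ^ d + g t) ^ m - exp (-(a * m * t ^ d))|
        ≤ t ^ q * (2 * m * exp (-(m * (a * t ^ d / 2)))
            * (b * t ^ (d + 1) + (a * t ^ d) ^ 2)) := by
          rw [show a * m * t ^ d = m * (a * t ^ d) by ring]
          gcongr
          exact key.trans (by gcongr)
      _ = _ := by ring_nf
  have hB : IntegrableOn (fun t ↦ t ^ q * exp (-(a * m * t ^ d))) (Ioc 0 h) :=
    (integrableOn_rpow_mul_exp_neg_mul_pow hd hq (by positivity)).mono_set Ioc_subset_Ioi_self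
  have hD : IntegrableOn (fun t ↦ t ^ q * (1 - a * t ^ d + g t) ^ m
      - t ^ q * exp (-(a * m * t ^ d))) (Ioc 0 h) := by
    refine Integrable.mono' (hΦint.mono_set Ioc_subset_Ioi_self) (by fun_prop) ?_
    filter_upwards [ae_restrict_mem measurableSet_Ioc] with t ht
    exact hbound t ht
  rw [integral_Icc_eq_integral_Ioc, integral_Icc_eq_integral_Ioc,
    ← integral_sub (hD.add hB |>.congr_fun (fun t _ ↦ sub_add_cancel _ _) measurableSet_Ioc) hB]
  calc _ ≤ ∫ t in Ioc 0 h, Φ t := by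
        refine norm_integral_le_of_norm_le (G := ℝ) (hΦint.mono_set Ioc_subset_Ioi_self) ?_
        filter_upwards [ae_restrict_mem measurableSet_Ioc] with t ht
        exact hbound t ht
    _ ≤ ∫ t in Ioi 0, Φ t := by
        refine setIntegral_mono_set hΦint ?_ Ioc_subset_Ioi_self.eventuallyLE
        filter_upwards [ae_restrict_mem measurableSet_Ioi] with t (ht : 0 < t)
        positivity
    _ = _ := by
        rw [hΦ, integral_const_mul, integral_add
          ((integrableOn_rpow_mul_exp_neg_mul_pow hd hq₁ hc).const_mul b)
          ((integrableOn_rpow_mul_exp_neg_mul_pow hd hq₂ hc).const_mul _),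
          integral_const_mul, integral_const_mul]
        rfl

theorem abs_setIntegral_pow_sub_laplaceMoment_le (hd : 0 < d)
    (hq : -1 < q) (ha : 0 < a) (hb : 0 ≤ b) (hh : 0 < h) (hah : a * h ^ d ≤ 1 / 2)
    (hbh : b * h ≤ a / 2) (hg : Measurable g)
    (hgb : ∀ t ∈ Icc 0 h, |g t| ≤ b * t ^ (d + 1)) {m : ℕ} (hm : 0 < m) :
    |(∫ t in Icc 0 h, t ^ q * (1 - a * t ^ d + g t) ^ m) - laplaceMoment d q (a * (m + 1 : ℕ))|
      ≤ (2 * b * laplaceMoment d (q + (d + 1 : ℕ)) (a / 2)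
          + 2 * a ^ 2 * laplaceMoment d (q + (2 * d : ℕ)) (a / 2)
          + (1 / h ^ d + a) * laplaceMoment d (q + d) a) * (m : ℝ) ^ (-((2 + q) / d)) := by
  set ν := (2 + q) / d with hν
  have hm1 : (1 : ℝ) ≤ m := by exact_mod_cast hm
  have hd0 : (0 : ℝ) < d := by exact_mod_cast hd
  have hd1 : (1 : ℝ) ≤ d := by exact_mod_cast hd
  have hq₁ : -1 < q + (d + 1 : ℕ) := by push_cast; linarith
  have hq₂ : -1 < q + (2 * d : ℕ) := by push_cast; linarith
  have hq₃ : -1 < q + d := by linarith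
  have hν1 : ν + 1 = (2 + q + d) / d := by rw [hν]; field_simp
  have hAB := abs_setIntegral_pow_sub_setIntegral_exp_le hd hq ha hb hah hbh hg hgb hm
  have hBM := abs_setIntegral_Icc_sub_laplaceMoment_le hd hq (c := a * m) (by positivity) hh
  have hMM := abs_laplaceMoment_sub_le hd hq (c := a * m) (c' := a * (m + 1 : ℕ)) (by positivity)
    (by gcongr; simp)
  have h₁ := laplaceMoment_mul_le hd hq₁ (half_pos ha) hm1 (p := ν + 1)
    (by rw [hν1]; exact div_le_div_of_nonneg_right (by push_cast; linarith) hd0.le)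
  have h₂ := laplaceMoment_mul_le hd hq₂ (half_pos ha) hm1 (p := ν + 1)
    (by rw [hν1]; exact div_le_div_of_nonneg_right (by push_cast; linarith) hd0.le)
  have h₃ := laplaceMoment_mul_le hd hq₃ ha hm1 (p := ν)
    (div_le_div_of_nonneg_right (by linarith) hd0.le)
  have hmν : (m : ℝ) * m ^ (-(ν + 1)) = m ^ (-ν) := by
    rw [neg_add, rpow_add (by positivity), rpow_neg_one]
    field_simp
  have hM₁ := (laplaceMoment_pos hd hq₁ (half_pos ha)).le
  have hM₂ := (laplaceMoment_pos hd hq₂ (half_pos ha)).le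
  have hM₃ := (laplaceMoment_pos hd hq₃ ha).le
  set A := ∫ t in Icc 0 h, t ^ q * (1 - a * t ^ d + g t) ^ m
  set B := ∫ t in Icc 0 h, t ^ q * exp (-(a * m * t ^ d))
  calc |A - laplaceMoment d q (a * (m + 1 : ℕ))|
      ≤ |A - B| + (|B - laplaceMoment d q (a * m)|
          + |laplaceMoment d q (a * m) - laplaceMoment d q (a * (m + 1 : ℕ))|) :=
        (abs_sub_le _ _ _).trans (by gcongr; exact abs_sub_le _ _ _)
    _ ≤ 2 * m * (b * laplaceMoment d (q + (d + 1 : ℕ)) (a / 2 * m)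
          + a ^ 2 * laplaceMoment d (q + (2 * d : ℕ)) (a / 2 * m))
        + (laplaceMoment d (q + d) (a * m) / h ^ d
          + (a * (m + 1 : ℕ) - a * m) * laplaceMoment d (q + d) (a * m)) := by gcongr
    _ = 2 * b * (m * laplaceMoment d (q + (d + 1 : ℕ)) (a / 2 * m))
        + 2 * a ^ 2 * (m * laplaceMoment d (q + (2 * d : ℕ)) (a / 2 * m))
        + (1 / h ^ d + a) * laplaceMoment d (q + d) (a * m) := by push_cast; ring
    _ ≤ 2 * b * (m * (m ^ (-(ν + 1)) * laplaceMoment d (q + (d + 1 : ℕ)) (a / 2)))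
        + 2 * a ^ 2 * (m * (m ^ (-(ν + 1)) * laplaceMoment d (q + (2 * d : ℕ)) (a / 2)))
        + (1 / h ^ d + a) * (m ^ (-ν) * laplaceMoment d (q + d) a) := by gcongr
    _ = _ := by rw [← hmν]; ring

end

/-- Laplace-type asymptotics: for `g` with `|g(t)| ≤ b t^{d+1}`,
`∫₀^h t^λ (1 − a t^d + g(t))^{n−1} dt = Γ((1+λ)/d)/(d (an)^{(1+λ)/d})
 + O((1+b) n^{−(2+λ)/d})`, with a constant depending only on `d, λ, a, h`. -/
theorem laplace_asymptotics_pareto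
    (d : ℕ) (hd : 1 ≤ d) (lam : ℝ) (hlam : lam ∈ Set.Icc (0:ℝ) 1)
    (a : ℝ) (ha : 0 < a) (h : ℝ) (hh : 0 < h) (hah : a * h ^ d ≤ 1/2) :
    ∃ C > 0, ∀ b : ℝ, 0 ≤ b → b * h ≤ a / 2 →
      ∀ g : ℝ → ℝ, Measurable g →
        (∀ t ∈ Set.Icc (0:ℝ) h, |g t| ≤ b * t ^ (d + 1)) →
      ∀ n : ℕ, 2 ≤ n →
        |(∫ t in Set.Icc (0:ℝ) h, t ^ lam * (1 - a * t ^ d + g t) ^ (n - 1))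
            - Real.Gamma ((1 + lam) / d) / (d * (a * n) ^ ((1 + lam) / (d:ℝ)))|
          ≤ C * (1 + b) * (n : ℝ) ^ (-(2 + lam) / (d:ℝ)) := by
  have hlam' : -1 < lam := by linarith [hlam.1]
  set K := 2 * laplaceMoment d (lam + (d + 1 : ℕ)) (a / 2)
    + 2 * a ^ 2 * laplaceMoment d (lam + (2 * d : ℕ)) (a / 2)
    + (1 / h ^ d + a) * laplaceMoment d (lam + d) a with hK_def
  have hM₁ := laplaceMoment_pos hd (q := lam + (d + 1 : ℕ)) (by push_cast; linarith)
    (half_pos ha)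
  have hM₂ := laplaceMoment_pos hd (q := lam + (2 * d : ℕ)) (by push_cast; linarith)
    (half_pos ha)
  have hM₃ := laplaceMoment_pos hd (q := lam + d) (by linarith [d.cast_nonneg (α := ℝ)]) ha
  have hK : 0 < K := by positivity
  refine ⟨2 ^ ((2 + lam) / d) * K, by positivity, ?_⟩
  intro b hb hbh g hg hgb n hn
  obtain ⟨m, rfl⟩ : ∃ m, n = m + 1 := ⟨n - 1, by omega⟩
  rw [Nat.add_sub_cancel, add_comm 1 lam, ← laplaceMoment_eq_Gamma_div hd hlam' (by positivity),
    neg_div]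
  calc _ ≤ _ := abs_setIntegral_pow_sub_laplaceMoment_le hd hlam' ha hb hh hah hbh hg hgb
        (by omega)
    _ ≤ K * (1 + b) * (2 ^ ((2 + lam) / d) * ((m + 1 : ℕ) : ℝ) ^ (-((2 + lam) / d))) := by
        have hm : (1 : ℝ) ≤ m := by exact_mod_cast (by omega : 1 ≤ m)
        gcongr ?_ * ?_
        · have : 0 ≤ b * (2 * a ^ 2 * laplaceMoment d (lam + (2 * d : ℕ)) (a / 2)
              + (1 / h ^ d + a) * laplaceMoment d (lam + d) a) := by positivity
          rw [hK_def]
          linarith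
        · exact rpow_neg_le_rpow_mul_rpow_neg (by linarith) (by positivity)
            (by push_cast; linarith) (div_nonneg (by linarith) d.cast_nonneg)
    _ = _ := by ring
end
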